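/- arXiv:1907.03738 — 2 statements merged into one kernel-verified Lean document; each statement's English description precedes it below -/
import Mathlib

section
/- Let I be a dyadic cube in ℝ^d and let ω(I) denote the unique dyadic child of I whose closure contains the center of the parent cube of I. If I is a dyadic cube of side length 2^{-N} and J is a dyadic cube of side length 2^{-ℓ} with ℓ > N whose closure meets the boundary ∂I, then for all x ∈ ω(J) one has 2^{-ℓ-1} ≤ dist_∞(x, ∂I) ≤ 2^{-ℓ}, where dist_∞ is the distance in the sup-norm. -/
/-!
Write `u = 2^(-ℓ-1)` for the side length of `ω(J)`. Upper bound: `ω(J)` lies in `J`, and the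
closure of `J` contains a point of `∂I`, so every `x ∈ ω(J)` is within the side length `2u` of
`J` from `∂I`. Lower bound: a point of `∂I` has a coordinate in `2^(-N) ℤ ⊆ 4u ℤ` (as `ℓ > N`),
while `ω(J)` is the child of `J` nearest to the center of its parent, so each of its coordinates
ranges over an interval `[w u, (w + 1) u]` with `w ≡ 1, 2 (mod 4)`, at distance at least `u`
from `4u ℤ`.
-/

open MeasureTheory Set Metric

noncomputable section

/-- The dyadic cube of generation `ℓ` (side length `2^(-ℓ)`) with index `ν ∈ ℤ^d`. -/
def dyadicCube (d ℓ : ℕ) (ν : Fin d → ℤ) : Set (Fin d → ℝ) :=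
  Set.pi Set.univ fun i =>
    Set.Ico ((ν i : ℝ) * (2:ℝ) ^ (-(ℓ:ℤ))) (((ν i : ℝ) + 1) * (2:ℝ) ^ (-(ℓ:ℤ)))

/-- The index of the child `ω(J)` of the dyadic cube `J` of generation `ℓ` with index `ν`:
the unique child whose closure contains the center of the parent cube of `J`. -/
def omegaIdx (d : ℕ) (ν : Fin d → ℤ) : Fin d → ℤ :=
  fun i => 2 * ν i + (if Even (ν i) then 1 else 0)

/-- The cube `ω(J)` for `J` the dyadic cube of generation `ℓ` and index `ν`. -/
def omegaCube (d ℓ : ℕ) (ν : Fin d → ℤ) : Set (Fin d → ℝ) :=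
  dyadicCube d (ℓ + 1) (omegaIdx d ν)

lemma two_zpow_neg_eq_two_mul (ℓ : ℕ) :
    (2:ℝ) ^ (-(ℓ:ℤ)) = 2 * (2:ℝ) ^ (-(ℓ:ℤ) - 1) := by
  rw [zpow_sub₀ two_ne_zero, zpow_one]
  ring

lemma two_zpow_neg_succ (ℓ : ℕ) :
    (2:ℝ) ^ (-((ℓ + 1 : ℕ) : ℤ)) = (2:ℝ) ^ (-(ℓ:ℤ) - 1) := by
  push_cast
  ring_nf

lemma closure_dyadicCube (d ℓ : ℕ) (ν : Fin d → ℤ) :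
    closure (dyadicCube d ℓ ν) = Set.pi Set.univ fun i =>
      Set.Icc ((ν i : ℝ) * (2:ℝ) ^ (-(ℓ:ℤ))) (((ν i : ℝ) + 1) * (2:ℝ) ^ (-(ℓ:ℤ))) := by
  rw [dyadicCube, closure_pi_set]
  refine Set.pi_congr rfl fun i _ => closure_Ico ?_
  have : (0:ℝ) < (2:ℝ) ^ (-(ℓ:ℤ)) := by positivity
  nlinarith

lemma interior_dyadicCube (d ℓ : ℕ) (ν : Fin d → ℤ) :
    interior (dyadicCube d ℓ ν) = Set.pi Set.univ fun i =>
      Set.Ioo ((ν i : ℝ) * (2:ℝ) ^ (-(ℓ:ℤ))) (((ν i : ℝ) + 1) * (2:ℝ) ^ (-(ℓ:ℤ))) := by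
  rw [dyadicCube, interior_pi_set finite_univ]
  simp only [interior_Ico]

lemma exists_coord_eq_intCast_mul_of_mem_frontier_dyadicCube {d ℓ : ℕ} {ν : Fin d → ℤ}
    {y : Fin d → ℝ} (hy : y ∈ frontier (dyadicCube d ℓ ν)) :
    ∃ i, ∃ m : ℤ, y i = m * (2:ℝ) ^ (-(ℓ:ℤ)) := by
  rw [frontier, closure_dyadicCube, interior_dyadicCube] at hy
  obtain ⟨hy_closed, hy_open⟩ := hy
  obtain ⟨i, -, hi⟩ := not_forall₂.mp hy_open
  obtain ⟨hlo, hhi⟩ := hy_closed i (mem_univ i)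
  rcases not_and_or.mp hi with h | h
  · exact ⟨i, ν i, le_antisymm (not_lt.mp h) hlo⟩
  · exact ⟨i, ν i + 1, by push_cast; exact le_antisymm hhi (not_lt.mp h)⟩

lemma dist_le_of_mem_closure_dyadicCube {d ℓ : ℕ} {ν : Fin d → ℤ} {x y : Fin d → ℝ}
    (hx : x ∈ closure (dyadicCube d ℓ ν)) (hy : y ∈ closure (dyadicCube d ℓ ν)) :
    dist x y ≤ (2:ℝ) ^ (-(ℓ:ℤ)) := by
  rw [closure_dyadicCube, pi_univ_Icc] at hx hy
  refine (Real.dist_le_of_mem_pi_Icc hx hy).trans ((dist_pi_le_iff (by positivity)).2 fun i => ?_)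
  rw [Real.dist_eq, abs_sub_comm, add_mul, one_mul, add_sub_cancel_left,
    abs_of_pos (by positivity)]

lemma dyadicCube_succ_subset {d ℓ : ℕ} {κ ν : Fin d → ℤ} (hκ : ∀ i, κ i / 2 = ν i) :
    dyadicCube d (ℓ + 1) κ ⊆ dyadicCube d ℓ ν := by
  intro x hx i _
  obtain ⟨hlo, hhi⟩ := hx i (mem_univ i)
  rw [two_zpow_neg_succ] at hlo hhi
  have := hκ i
  have hκlo : 2 * (ν i : ℝ) ≤ κ i := by exact_mod_cast (by omega : 2 * ν i ≤ κ i)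
  have hκhi : (κ i : ℝ) + 1 ≤ 2 * ν i + 2 := by exact_mod_cast (by omega : κ i + 1 ≤ 2 * ν i + 2)
  have hu : (0:ℝ) < (2:ℝ) ^ (-(ℓ:ℤ) - 1) := by positivity
  rw [mem_Ico, two_zpow_neg_eq_two_mul]
  constructor <;> nlinarith

lemma omegaIdx_ediv_two (d : ℕ) (ν : Fin d → ℤ) (i : Fin d) : omegaIdx d ν i / 2 = ν i := by
  unfold omegaIdx
  split_ifs <;> omega

lemma omegaIdx_emod_four (d : ℕ) (ν : Fin d → ℤ) (i : Fin d) :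
    omegaIdx d ν i % 4 = 1 ∨ omegaIdx d ν i % 4 = 2 := by
  unfold omegaIdx
  rcases Int.even_or_odd (ν i) with ⟨q, hq⟩ | ⟨q, hq⟩
  · rw [if_pos ⟨q, hq⟩]; omega
  · rw [if_neg (Int.not_even_iff_odd.mpr ⟨q, hq⟩)]; omega

lemma omegaCube_subset_dyadicCube (d ℓ : ℕ) (ν : Fin d → ℤ) :
    omegaCube d ℓ ν ⊆ dyadicCube d ℓ ν :=
  dyadicCube_succ_subset (omegaIdx_ediv_two d ν)

lemma le_abs_sub_intCast_mul {w m : ℤ} (hwm : m + 1 ≤ w ∨ w + 2 ≤ m) {u x : ℝ} (hu : 0 ≤ u)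
    (hx : x ∈ Icc (w * u) ((w + 1) * u)) : u ≤ |x - m * u| := by
  rcases hwm with h | h
  · have h' : (m:ℝ) + 1 ≤ w := by exact_mod_cast h
    exact le_abs.mpr (Or.inl (by nlinarith [hx.1]))
  · have h' : (w:ℝ) + 2 ≤ m := by exact_mod_cast h
    exact le_abs.mpr (Or.inr (by nlinarith [hx.2]))

lemma le_abs_sub_of_mem_omegaCube {d N ℓ : ℕ} (hℓ : N < ℓ) {ν : Fin d → ℤ} {x : Fin d → ℝ}
    (hx : x ∈ omegaCube d ℓ ν) (i : Fin d) (m : ℤ) :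
    (2:ℝ) ^ (-(ℓ:ℤ) - 1) ≤ |x i - m * (2:ℝ) ^ (-(N:ℤ))| := by
  set u := (2:ℝ) ^ (-(ℓ:ℤ) - 1)
  have hxi : x i ∈ Icc (omegaIdx d ν i * u) ((omegaIdx d ν i + 1) * u) := by
    obtain ⟨hlo, hhi⟩ := hx i (mem_univ i)
    rw [two_zpow_neg_succ] at hlo hhi
    exact ⟨hlo, hhi.le⟩
  have hface : m * (2:ℝ) ^ (-(N:ℤ)) = ((4 * (m * 2 ^ (ℓ - 1 - N)) : ℤ) : ℝ) * u := by
    have : (2:ℝ) ^ (-(N:ℤ)) = (2:ℝ) ^ ((ℓ - 1 - N + 2 : ℕ) : ℤ) * u := by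
      rw [← zpow_add₀ two_ne_zero]
      congr 1
      omega
    rw [this, zpow_natCast, pow_add]
    push_cast
    ring
  rw [hface]
  exact le_abs_sub_intCast_mul (by have := omegaIdx_emod_four d ν i; omega) (by positivity) hxi

theorem stmt0_general (d N ℓ : ℕ) (hℓ : N < ℓ) (μ ν : Fin d → ℤ)
    (hmeet : (closure (dyadicCube d ℓ ν) ∩ frontier (dyadicCube d N μ)).Nonempty) :
    ∀ x ∈ omegaCube d ℓ ν,
      (2:ℝ) ^ (-(ℓ:ℤ) - 1) ≤ Metric.infDist x (frontier (dyadicCube d N μ)) ∧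
      Metric.infDist x (frontier (dyadicCube d N μ)) ≤ (2:ℝ) ^ (-(ℓ:ℤ)) := by
  intro x hx
  obtain ⟨p, hpJ, hpI⟩ := hmeet
  constructor
  · refine (le_infDist ⟨p, hpI⟩).2 fun y hy => ?_
    obtain ⟨i, m, hyi⟩ := exists_coord_eq_intCast_mul_of_mem_frontier_dyadicCube hy
    calc (2:ℝ) ^ (-(ℓ:ℤ) - 1) ≤ |x i - y i| := hyi ▸ le_abs_sub_of_mem_omegaCube hℓ hx i m
      _ = dist (x i) (y i) := (Real.dist_eq _ _).symm
      _ ≤ dist x y := dist_le_pi_dist x y i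
  · have hxJ : x ∈ closure (dyadicCube d ℓ ν) :=
      subset_closure (omegaCube_subset_dyadicCube d ℓ ν hx)
    exact (infDist_le_dist_of_mem hpI).trans (dist_le_of_mem_closure_dyadicCube hxJ hpJ)

/-- If `I` is a dyadic cube of side length `2^(-N)` and `J` a dyadic cube of side length
`2^(-ℓ)` with `ℓ > N` whose closure meets `∂I`, then all `x ∈ ω(J)` satisfy
`2^(-ℓ-1) ≤ dist_∞(x, ∂I) ≤ 2^(-ℓ)`. (The metric on `Fin d → ℝ` is the sup-metric.) -/
theorem stmt0 (d N ℓ : ℕ) (hd : 0 < d) (hℓ : N < ℓ) (μ ν : Fin d → ℤ)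
    (hmeet : (closure (dyadicCube d ℓ ν) ∩ frontier (dyadicCube d N μ)).Nonempty) :
    ∀ x ∈ omegaCube d ℓ ν,
      (2:ℝ) ^ (-(ℓ:ℤ) - 1) ≤ Metric.infDist x (frontier (dyadicCube d N μ)) ∧
      Metric.infDist x (frontier (dyadicCube d N μ)) ≤ (2:ℝ) ^ (-(ℓ:ℤ)) :=
  stmt0_general d N ℓ hℓ μ ν hmeet

end
end

section
/- Let I be a dyadic cube in ℝ^d of side length 2^{-N}, let ℓ₁, ℓ₂ > N, and let J₁, J₂ be two distinct dyadic cubes of side lengths 2^{-ℓ₁}, 2^{-ℓ₂} respectively, both of whose closures meet ∂I. Then the cubes ω(J₁) and ω(J₂) have disjoint interiors, where ω(J) denotes the child of J whose closure contains the center of the parent of J. -/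
open MeasureTheory Set Metric

noncomputable section

/-- The one-dimensional dyadic interval. -/
def dyI (ℓ : ℕ) (k : ℤ) : Set ℝ :=
  Set.Ico ((k : ℝ) * (2:ℝ) ^ (-(ℓ:ℤ))) (((k : ℝ) + 1) * (2:ℝ) ^ (-(ℓ:ℤ)))

lemma dyadicCube_eq_pi (d ℓ : ℕ) (ν : Fin d → ℤ) :
    dyadicCube d ℓ ν = Set.pi Set.univ fun i => dyI ℓ (ν i) := rfl

lemma mem_dyI {ℓ : ℕ} {k : ℤ} {x : ℝ} :
    x ∈ dyI ℓ k ↔ (k : ℝ) ≤ x * 2 ^ (ℓ:ℤ) ∧ x * 2 ^ (ℓ:ℤ) < (k : ℝ) + 1 := by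
  have hc : (0:ℝ) < 2 ^ (ℓ:ℤ) := by positivity
  simp only [dyI, Set.mem_Ico, zpow_neg, ← div_eq_mul_inv, div_le_iff₀ hc, lt_div_iff₀ hc]

lemma dyI_unique {ℓ : ℕ} {j k : ℤ} {x : ℝ} (hj : x ∈ dyI ℓ j) (hk : x ∈ dyI ℓ k) :
    j = k := by
  rw [mem_dyI] at hj hk
  have h1 : (j : ℝ) < (k : ℝ) + 1 := lt_of_le_of_lt hj.1 hk.2
  have h2 : (k : ℝ) < (j : ℝ) + 1 := lt_of_le_of_lt hk.1 hj.2
  have h1' : j < k + 1 := by exact_mod_cast h1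
  have h2' : k < j + 1 := by exact_mod_cast h2
  omega

lemma dyI_subset {ℓ m : ℕ} (h : ℓ ≤ m) (k : ℤ) :
    dyI m k ⊆ dyI ℓ (k / 2 ^ (m - ℓ)) := by
  intro x hx
  rw [mem_dyI] at hx ⊢
  set s : ℕ := m - ℓ with hs
  have hb : (0:ℤ) < 2 ^ s := by positivity
  have hbR : (0:ℝ) < ((2:ℤ) ^ s : ℤ) := by exact_mod_cast hb
  have hkey : x * 2 ^ (ℓ:ℤ) * ((2 ^ s : ℤ) : ℝ) = x * 2 ^ (m:ℤ) := by
    push_cast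
    rw [mul_assoc, ← zpow_natCast (2:ℝ) s, ← zpow_add₀ (by norm_num : (2:ℝ) ≠ 0)]
    congr 2
    omega
  constructor
  · have h1 : ((k / 2 ^ s : ℤ) : ℝ) * ((2 ^ s : ℤ) : ℝ) ≤ x * 2 ^ (ℓ:ℤ) * ((2 ^ s : ℤ) : ℝ) := by
      rw [hkey]
      calc ((k / 2 ^ s : ℤ) : ℝ) * ((2 ^ s : ℤ) : ℝ) = ((k / 2 ^ s * 2 ^ s : ℤ) : ℝ) := by
            push_cast; ring
        _ ≤ (k : ℝ) := by exact_mod_cast Int.ediv_mul_le k (by positivity : (2:ℤ) ^ s ≠ 0)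
        _ ≤ x * 2 ^ (m:ℤ) := hx.1
    exact le_of_mul_le_mul_right h1 hbR
  · have h2 : x * 2 ^ (ℓ:ℤ) * ((2 ^ s : ℤ) : ℝ) <
        (((k / 2 ^ s : ℤ) : ℝ) + 1) * ((2 ^ s : ℤ) : ℝ) := by
      rw [hkey]
      calc x * 2 ^ (m:ℤ) < (k : ℝ) + 1 := hx.2
        _ ≤ (((k / 2 ^ s : ℤ) : ℝ) + 1) * ((2 ^ s : ℤ) : ℝ) := by
            have := Int.lt_ediv_add_one_mul_self k hb
            have : k + 1 ≤ (k / 2 ^ s + 1) * 2 ^ s := by omega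
            calc (k:ℝ) + 1 = ((k + 1 : ℤ) : ℝ) := by push_cast; ring
              _ ≤ (((k / 2 ^ s + 1) * 2 ^ s : ℤ) : ℝ) := by exact_mod_cast this
              _ = (((k / 2 ^ s : ℤ) : ℝ) + 1) * ((2 ^ s : ℤ) : ℝ) := by push_cast; ring
    exact lt_of_mul_lt_mul_right h2 hbR.le

lemma dyI_subset_of_mem {ℓ m : ℕ} (h : ℓ ≤ m) {j k : ℤ} {x : ℝ}
    (hj : x ∈ dyI ℓ j) (hk : x ∈ dyI m k) : dyI m k ⊆ dyI ℓ j := by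
  have hsub := dyI_subset h k
  have : j = k / 2 ^ (m - ℓ) := dyI_unique hj (hsub hk)
  rw [this]; exact hsub

/-- `ω(J) ⊆ J` coordinatewise. -/
lemma omega_sub (ℓ : ℕ) (ν : ℤ) :
    dyI (ℓ + 1) (2 * ν + (if Even ν then 1 else 0)) ⊆ dyI ℓ ν := by
  have h := dyI_subset (Nat.le_succ ℓ) (2 * ν + (if Even ν then 1 else 0))
  have he : (2 * ν + (if Even ν then 1 else 0)) / 2 ^ (ℓ + 1 - ℓ) = ν := by
    have : ℓ + 1 - ℓ = 1 := by omega
    rw [this, pow_one]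
    split_ifs <;> omega
  rwa [he] at h

/-- The closure of the 1-d component of `ω(J)` avoids multiples of `2^{-N}` when `N < ℓ`. -/
lemma omega_avoid {N ℓ : ℕ} (h : N < ℓ) (ν j : ℤ) :
    ((j : ℝ) * (2:ℝ) ^ (-(N:ℤ))) ∉ closure (dyI (ℓ + 1) (2 * ν + (if Even ν then 1 else 0))) := by
  set m : ℤ := 2 * ν + (if Even ν then 1 else 0) with hm
  intro hmem
  have hab : ((m : ℝ) * (2:ℝ) ^ (-((ℓ+1:ℕ):ℤ))) ≠ (((m : ℝ) + 1) * (2:ℝ) ^ (-((ℓ+1:ℕ):ℤ))) := by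
    have hc : (0:ℝ) < (2:ℝ) ^ (-((ℓ+1:ℕ):ℤ)) := by positivity
    intro hcon
    nlinarith [hc]
  rw [dyI, closure_Ico hab, Set.mem_Icc] at hmem
  set s : ℕ := ℓ + 1 - N with hs
  have hs2 : 2 ≤ s := by omega
  have hc : (0:ℝ) < (2:ℝ) ^ (-((ℓ+1:ℕ):ℤ)) := by positivity
  -- rewrite 2^{-N} = 2^s * 2^{-(ℓ+1)}
  have hpow : (2:ℝ) ^ (-(N:ℤ)) = ((2:ℤ) ^ s : ℤ) * (2:ℝ) ^ (-((ℓ+1:ℕ):ℤ)) := by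
    push_cast
    rw [← zpow_natCast (2:ℝ) s, ← zpow_add₀ (by norm_num : (2:ℝ) ≠ 0)]
    congr 1
    omega
  rw [hpow] at hmem
  have h1 : (m : ℝ) ≤ (j : ℝ) * ((2:ℤ) ^ s : ℤ) := by
    have := hmem.1
    have h1' : (m : ℝ) * (2:ℝ) ^ (-((ℓ+1:ℕ):ℤ)) ≤
        ((j : ℝ) * ((2:ℤ) ^ s : ℤ)) * (2:ℝ) ^ (-((ℓ+1:ℕ):ℤ)) := by
      calc (m : ℝ) * (2:ℝ) ^ (-((ℓ+1:ℕ):ℤ)) ≤ (j:ℝ) * (((2:ℤ) ^ s : ℤ) * (2:ℝ) ^ (-((ℓ+1:ℕ):ℤ))) := this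
        _ = ((j : ℝ) * ((2:ℤ) ^ s : ℤ)) * (2:ℝ) ^ (-((ℓ+1:ℕ):ℤ)) := by ring
    exact le_of_mul_le_mul_right h1' hc
  have h2 : (j : ℝ) * ((2:ℤ) ^ s : ℤ) ≤ (m : ℝ) + 1 := by
    have := hmem.2
    have h2' : ((j : ℝ) * ((2:ℤ) ^ s : ℤ)) * (2:ℝ) ^ (-((ℓ+1:ℕ):ℤ)) ≤
        ((m : ℝ) + 1) * (2:ℝ) ^ (-((ℓ+1:ℕ):ℤ)) := by
      calc ((j : ℝ) * ((2:ℤ) ^ s : ℤ)) * (2:ℝ) ^ (-((ℓ+1:ℕ):ℤ))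
          = (j:ℝ) * (((2:ℤ) ^ s : ℤ) * (2:ℝ) ^ (-((ℓ+1:ℕ):ℤ))) := by ring
        _ ≤ ((m : ℝ) + 1) * (2:ℝ) ^ (-((ℓ+1:ℕ):ℤ)) := this
    exact le_of_mul_le_mul_right h2' hc
  have h1' : m ≤ j * 2 ^ s := by exact_mod_cast h1
  have h2' : j * 2 ^ s ≤ m + 1 := by exact_mod_cast h2
  -- j * 2^s is divisible by 4
  have h4 : (4:ℤ) ∣ j * 2 ^ s := by
    obtain ⟨t, ht⟩ : ∃ t, s = t + 2 := ⟨s - 2, by omega⟩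
    exact ⟨j * 2 ^ t, by rw [ht, pow_add]; ring⟩
  obtain ⟨c, hc4⟩ := h4
  rcases Int.even_or_odd ν with ⟨n, hn⟩ | ⟨n, hn⟩
  · have : m = 4 * n + 1 := by
      rw [hm, if_pos ⟨n, hn⟩]; omega
    omega
  · have : m = 4 * n + 2 := by
      rw [hm, if_neg (by simp [hn, Int.even_add_one, parity_simps])]; omega
    omega

/-- A point on the frontier of a dyadic cube has some coordinate a multiple of `2^{-N}`. -/
lemma frontier_coord {d N : ℕ} (μ : Fin d → ℤ) {y : Fin d → ℝ}
    (hy : y ∈ frontier (dyadicCube d N μ)) :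
    ∃ i : Fin d, ∃ j : ℤ, y i = (j : ℝ) * (2:ℝ) ^ (-(N:ℤ)) := by
  rw [frontier] at hy
  obtain ⟨hyc, hyi⟩ := hy
  rw [dyadicCube_eq_pi, closure_pi_set] at hyc
  rw [dyadicCube_eq_pi, interior_pi_set Set.finite_univ] at hyi
  simp only [Set.mem_pi, Set.mem_univ, forall_true_left, Function.comp] at hyc hyi
  push_neg at hyi
  obtain ⟨i, hi⟩ := hyi
  have hc := hyc i
  have hab : ((μ i : ℝ) * (2:ℝ) ^ (-(N:ℤ))) ≠ (((μ i : ℝ) + 1) * (2:ℝ) ^ (-(N:ℤ))) := by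
    have hcpos : (0:ℝ) < (2:ℝ) ^ (-(N:ℤ)) := by positivity
    intro hcon; nlinarith [hcpos]
  rw [dyI, closure_Ico hab, Set.mem_Icc] at hc
  rw [dyI, interior_Ico, Set.mem_Ioo] at hi
  push_neg at hi
  rcases lt_or_ge ((μ i : ℝ) * (2:ℝ) ^ (-(N:ℤ))) (y i) with hlt | hle
  · refine ⟨i, μ i + 1, ?_⟩
    have := hi hlt
    have h2 := hc.2
    push_cast
    linarith
  · exact ⟨i, μ i, le_antisymm hle hc.1⟩

/-- Key asymmetric lemma: assuming `ℓ₁ ≤ ℓ₂`. -/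
lemma key_lemma {d N ℓ₁ ℓ₂ : ℕ} (h1 : N < ℓ₁) (hle : ℓ₁ ≤ ℓ₂)
    {μ ν₁ ν₂ : Fin d → ℤ}
    (hne : dyadicCube d ℓ₁ ν₁ ≠ dyadicCube d ℓ₂ ν₂)
    (hm2 : (closure (dyadicCube d ℓ₂ ν₂) ∩ frontier (dyadicCube d N μ)).Nonempty)
    {x : Fin d → ℝ} (hx1 : x ∈ omegaCube d ℓ₁ ν₁) (hx2 : x ∈ omegaCube d ℓ₂ ν₂) : False := by
  have hx1' : ∀ i, x i ∈ dyI (ℓ₁ + 1) (omegaIdx d ν₁ i) := fun i => hx1 i (Set.mem_univ i)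
  have hx2' : ∀ i, x i ∈ dyI (ℓ₂ + 1) (omegaIdx d ν₂ i) := fun i => hx2 i (Set.mem_univ i)
  rcases eq_or_lt_of_le hle with heq | hlt
  · -- equal generations: the cubes coincide, contradiction
    subst heq
    apply hne
    have hν : ν₁ = ν₂ := by
      funext i
      have := dyI_unique (hx1' i) (hx2' i)
      simp only [omegaIdx] at this
      split_ifs at this <;> omega
    rw [hν]
  · -- ℓ₁ < ℓ₂
    obtain ⟨y, hyc, hyf⟩ := hm2
    obtain ⟨i, j, hij⟩ := frontier_coord μ hyf
    apply omega_avoid h1 (ν₁ i) j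
    rw [← hij]
    -- x i ∈ dyI ℓ₂ (ν₂ i)
    have hxJ2 : x i ∈ dyI ℓ₂ (ν₂ i) := omega_sub ℓ₂ (ν₂ i) (hx2' i)
    -- dyI ℓ₂ (ν₂ i) ⊆ dyI (ℓ₁+1) (omegaIdx d ν₁ i)
    have hsub : dyI ℓ₂ (ν₂ i) ⊆ dyI (ℓ₁ + 1) (omegaIdx d ν₁ i) :=
      dyI_subset_of_mem (by omega) (hx1' i) hxJ2
    -- y i ∈ closure (dyI ℓ₂ (ν₂ i))
    have hyi : y i ∈ closure (dyI ℓ₂ (ν₂ i)) := by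
      rw [dyadicCube_eq_pi, closure_pi_set] at hyc
      exact hyc i (Set.mem_univ i)
    have : y i ∈ closure (dyI (ℓ₁ + 1) (omegaIdx d ν₁ i)) :=
      closure_mono hsub hyi
    simpa only [omegaIdx] using this

/-- If `I` is a dyadic cube of generation `N` and `J₁, J₂` are two distinct dyadic cubes, of
generations `ℓ₁, ℓ₂ > N`, whose closures meet `∂I`, then `ω(J₁)` and `ω(J₂)` have disjoint
interiors. -/
theorem stmt1 (d N ℓ₁ ℓ₂ : ℕ) (hd : 0 < d) (h1 : N < ℓ₁) (h2 : N < ℓ₂)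
    (μ ν₁ ν₂ : Fin d → ℤ)
    (hne : dyadicCube d ℓ₁ ν₁ ≠ dyadicCube d ℓ₂ ν₂)
    (hm1 : (closure (dyadicCube d ℓ₁ ν₁) ∩ frontier (dyadicCube d N μ)).Nonempty)
    (hm2 : (closure (dyadicCube d ℓ₂ ν₂) ∩ frontier (dyadicCube d N μ)).Nonempty) :
    interior (omegaCube d ℓ₁ ν₁) ∩ interior (omegaCube d ℓ₂ ν₂) = ∅ := by
  rw [Set.eq_empty_iff_forall_notMem]
  rintro x ⟨hx1, hx2⟩
  have hx1' : x ∈ omegaCube d ℓ₁ ν₁ := interior_subset hx1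
  have hx2' : x ∈ omegaCube d ℓ₂ ν₂ := interior_subset hx2
  rcases le_total ℓ₁ ℓ₂ with h | h
  · exact key_lemma h1 h hne hm2 hx1' hx2'
  · exact key_lemma h2 h (Ne.symm hne) hm1 hx2' hx1'

end
end
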